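/- Green's identity: for all f, g ∈ D*, ⟨A*f, g⟩ − ⟨f, A*g⟩ = Γ₁f·conj(Γ₂g) − Γ₂f·conj(Γ₁g) + ⟨f, ψ⟩⟨φ, g⟩ − ⟨f, φ⟩⟨ψ, g⟩. -/

import Mathlib

/-!
As `x` is real, `(x f - c_f) ḡ - f · conj (x g - c_g) = f c̄_g - c_f ḡ`, which equals
`(f - c_f σ) c̄_g - c_f · conj (g - c_g σ)` with `σ x = sign x / √(x² + 1)`. Both brackets are
integrable, since
`h - c σ = (x h - c) · x / (1 + x²) + h / (1 + x²) + c (x - sign x √(1 + x²)) / (1 + x²)`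
is a sum of products of L² functions and a function bounded by `1 / (1 + x²)`. Integrating gives the
boundary form, and the rank-one perturbation `⟨·, ψ⟩ φ` contributes the remaining two terms.
-/

open MeasureTheory ComplexConjugate

/-- The (paper-convention) `L²(ℝ)` inner product `⟨f,g⟩ = ∫ f · conj g`,
linear in the first argument. -/
noncomputable def ip (f g : ℝ → ℂ) : ℂ :=
  ∫ x : ℝ, f x * (starRingEnd ℂ) (g x)

/-- The boundary operator `Γ₁`, evaluated on `g ∈ D*` with associated constant `c = c_g`:
`Γ₁ g = ∫_ℝ ( g(x) − c·sign(x)·(x²+1)^{−1/2} ) dx`. -/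
noncomputable def Gam1 (g : ℝ → ℂ) (c : ℂ) : ℂ :=
  ∫ x : ℝ, (g x - c * ((Real.sign x : ℝ) : ℂ) * (((Real.sqrt (x ^ 2 + 1) : ℝ) : ℂ))⁻¹)

lemma ip_conj (u v : ℝ → ℂ) : conj (ip u v) = ip v u := by
  rw [ip, ← integral_conj, ip]
  simp [mul_comm]

lemma integrable_mul_conj {α : Type*} [MeasurableSpace α] {μ : Measure α} {u v : α → ℂ}
    (hu : MemLp u 2 μ) (hv : MemLp v 2 μ) : Integrable (fun x => u x * conj (v x)) μ :=
  hu.integrable_mul hv.star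

lemma MeasureTheory.Integrable.conj {α : Type*} [MeasurableSpace α] {μ : Measure α} {u : α → ℂ}
    (hu : Integrable u μ) : Integrable (fun x => conj (u x)) μ :=
  (RCLike.conjCLE (K := ℂ)).toContinuousLinearMap.integrable_comp hu

lemma ip_add_const_mul_left {F φ g : ℝ → ℂ} (hF : MemLp F 2) (hφ : MemLp φ 2) (hg : MemLp g 2)
    (a : ℂ) : ip (fun x => F x + a * φ x) g = ip F g + a * ip φ g := by
  simp only [ip, add_mul, mul_assoc]
  rw [integral_add (integrable_mul_conj hF hg) ((integrable_mul_conj hφ hg).const_mul a),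
    integral_const_mul]

lemma ip_add_const_mul_right {f G φ : ℝ → ℂ} (hf : MemLp f 2) (hG : MemLp G 2) (hφ : MemLp φ 2)
    (b : ℂ) : ip f (fun x => G x + b * φ x) = ip f G + conj b * ip f φ := by
  rw [← ip_conj, ip_add_const_mul_left hG hφ hf, map_add, map_mul, ip_conj, ip_conj]

@[fun_prop]
lemma Real.measurable_sign : Measurable Real.sign :=
  Measurable.ite (measurableSet_lt measurable_id measurable_const) measurable_const
    (Measurable.ite (measurableSet_lt measurable_const measurable_id) measurable_const
      measurable_const)

lemma memLp_two_of_sq_le_inv_one_add_sq {w : ℝ → ℝ} (hw : Measurable w)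
    (h : ∀ x, w x ^ 2 ≤ (1 + x ^ 2)⁻¹) : MemLp w 2 := by
  rw [memLp_two_iff_integrable_sq_norm hw.aestronglyMeasurable]
  refine integrable_inv_one_add_sq.mono' (hw.norm.pow_const 2).aestronglyMeasurable
    (.of_forall fun x => ?_)
  simpa [sq_abs] using h x

lemma memLp_div_one_add_sq : MemLp (fun x : ℝ => x / (1 + x ^ 2)) 2 := by
  refine memLp_two_of_sq_le_inv_one_add_sq (by fun_prop) fun x => ?_
  rw [div_pow, inv_eq_one_div, div_le_div_iff₀ (by positivity) (by positivity)]
  nlinarith [sq_nonneg x, sq_nonneg (x ^ 2)]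

lemma memLp_inv_one_add_sq : MemLp (fun x : ℝ => (1 + x ^ 2)⁻¹) 2 := by
  refine memLp_two_of_sq_le_inv_one_add_sq (by fun_prop) fun x => ?_
  rw [inv_pow, inv_le_inv₀ (by positivity) (by positivity)]
  nlinarith [sq_nonneg x, sq_nonneg (x ^ 2)]

lemma abs_sub_sign_mul_sqrt_le_one (x : ℝ) : |x - Real.sign x * √(1 + x ^ 2)| ≤ 1 := by
  have hsq : √(1 + x ^ 2) ^ 2 = 1 + x ^ 2 := Real.sq_sqrt (by positivity)
  have hnn := Real.sqrt_nonneg (1 + x ^ 2)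
  rcases lt_trichotomy x 0 with hx | rfl | hx
  · rw [Real.sign_of_neg hx, abs_le]
    constructor <;> nlinarith
  · simp
  · rw [Real.sign_of_pos hx, abs_le]
    constructor <;> nlinarith

lemma integrable_sub_sign_mul_sqrt_div : Integrable
    (fun x : ℝ => (x - Real.sign x * √(1 + x ^ 2)) / (1 + x ^ 2)) := by
  refine integrable_inv_one_add_sq.mono' (Measurable.aestronglyMeasurable (by fun_prop))
    (.of_forall fun x => ?_)
  rw [Real.norm_eq_abs, abs_div, abs_of_pos (by positivity : (0 : ℝ) < 1 + x ^ 2), div_eq_mul_inv]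
  exact mul_le_of_le_one_left (by positivity) (abs_sub_sign_mul_sqrt_le_one x)

lemma integrable_sub_const_mul_sign_div_sqrt {u : ℝ → ℂ} {c : ℂ} (hu : MemLp u 2)
    (hcu : MemLp (fun x : ℝ => (x : ℂ) * u x - c) 2) :
    Integrable (fun x : ℝ => u x - c * (Real.sign x : ℂ) * ((√(x ^ 2 + 1) : ℝ) : ℂ)⁻¹) := by
  have hdecomp : (fun x : ℝ => u x - c * (Real.sign x : ℂ) * ((√(x ^ 2 + 1) : ℝ) : ℂ)⁻¹) =
      fun x : ℝ => ((x : ℂ) * u x - c) * ((x / (1 + x ^ 2) : ℝ) : ℂ) +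
        u x * (((1 + x ^ 2)⁻¹ : ℝ) : ℂ) +
        c * (((x - Real.sign x * √(1 + x ^ 2)) / (1 + x ^ 2) : ℝ) : ℂ) := by
    funext x
    have hsq : ((√(1 + x ^ 2) : ℝ) : ℂ) ^ 2 = 1 + (x : ℂ) ^ 2 := by
      exact_mod_cast Real.sq_sqrt (by positivity)
    have hpos : ((√(1 + x ^ 2) : ℝ) : ℂ) ≠ 0 := by
      exact_mod_cast (Real.sqrt_pos.2 (by positivity)).ne'
    have hpos' : (1 + (x : ℂ) ^ 2) ≠ 0 := by
      rw [← hsq]; exact pow_ne_zero 2 hpos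
    rw [add_comm (x ^ 2) 1]
    push_cast
    field_simp
    linear_combination (c * (Real.sign x : ℂ)) * hsq
  rw [hdecomp]
  exact ((hcu.integrable_mul memLp_div_one_add_sq.ofReal).add
    (hu.integrable_mul memLp_inv_one_add_sq.ofReal)).add
    (integrable_sub_sign_mul_sqrt_div.ofReal.const_mul c)

lemma ip_mul_id_sub_sub_ip_mul_id_sub {f g : ℝ → ℂ} {cf cg : ℂ} (hf : MemLp f 2)
    (hcf : MemLp (fun x : ℝ => (x : ℂ) * f x - cf) 2) (hg : MemLp g 2)
    (hcg : MemLp (fun x : ℝ => (x : ℂ) * g x - cg) 2) :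
    ip (fun x : ℝ => (x : ℂ) * f x - cf) g - ip f (fun x : ℝ => (x : ℂ) * g x - cg) =
      Gam1 f cf * conj cg - cf * conj (Gam1 g cg) := by
  have hpointwise : ∀ x : ℝ,
      ((x : ℂ) * f x - cf) * conj (g x) - f x * conj ((x : ℂ) * g x - cg) =
      (f x - cf * (Real.sign x : ℂ) * ((√(x ^ 2 + 1) : ℝ) : ℂ)⁻¹) * conj cg -
        cf * conj (g x - cg * (Real.sign x : ℂ) * ((√(x ^ 2 + 1) : ℝ) : ℂ)⁻¹) := by
    intro x
    simp only [map_sub, map_mul, map_inv₀, Complex.conj_ofReal]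
    ring
  rw [ip, ip, ← integral_sub (integrable_mul_conj hcf hg) (integrable_mul_conj hf hcg),
    funext hpointwise,
    integral_sub ((integrable_sub_const_mul_sign_div_sqrt hf hcf).mul_const _)
      ((integrable_sub_const_mul_sign_div_sqrt hg hcg).conj.const_mul cf),
    integral_mul_const, integral_const_mul, integral_conj, Gam1, Gam1]

theorem stmt15_general (φ ψ : ℝ → ℂ)
    (hφ : MemLp φ 2 (volume : Measure ℝ))
    (f g : ℝ → ℂ) (cf cg : ℂ)
    (hf : MemLp f 2 (volume : Measure ℝ))
    (hcf : MemLp (fun x : ℝ => (x : ℂ) * f x - cf) 2 (volume : Measure ℝ))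
    (hg : MemLp g 2 (volume : Measure ℝ))
    (hcg : MemLp (fun x : ℝ => (x : ℂ) * g x - cg) 2 (volume : Measure ℝ)) :
    -- `⟨A*f, g⟩ − ⟨f, A*g⟩
    --    = Γ₁f·conj(Γ₂g) − Γ₂f·conj(Γ₁g) + ⟨f,ψ⟩⟨φ,g⟩ − ⟨f,φ⟩⟨ψ,g⟩`
    ip (fun x : ℝ => ((x : ℂ) * f x - cf) + ip f ψ * φ x) g -
        ip f (fun x : ℝ => ((x : ℂ) * g x - cg) + ip g ψ * φ x) =
      Gam1 f cf * (starRingEnd ℂ) cg - cf * (starRingEnd ℂ) (Gam1 g cg) +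
        ip f ψ * ip φ g - ip f φ * ip ψ g := by
  rw [ip_add_const_mul_left hcf hφ hg, ip_add_const_mul_right hf hcg hφ, ip_conj,
    ← ip_mul_id_sub_sub_ip_mul_id_sub hf hcf hg hcg]
  ring

theorem stmt15 (φ ψ : ℝ → ℂ)
    (hφ : MemLp φ 2 (volume : Measure ℝ)) (hψ : MemLp ψ 2 (volume : Measure ℝ))
    (f g : ℝ → ℂ) (cf cg : ℂ)
    (hf : MemLp f 2 (volume : Measure ℝ))
    (hcf : MemLp (fun x : ℝ => (x : ℂ) * f x - cf) 2 (volume : Measure ℝ))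
    (hg : MemLp g 2 (volume : Measure ℝ))
    (hcg : MemLp (fun x : ℝ => (x : ℂ) * g x - cg) 2 (volume : Measure ℝ)) :
    -- `⟨A*f, g⟩ − ⟨f, A*g⟩
    --    = Γ₁f·conj(Γ₂g) − Γ₂f·conj(Γ₁g) + ⟨f,ψ⟩⟨φ,g⟩ − ⟨f,φ⟩⟨ψ,g⟩`
    ip (fun x : ℝ => ((x : ℂ) * f x - cf) + ip f ψ * φ x) g -
        ip f (fun x : ℝ => ((x : ℂ) * g x - cg) + ip g ψ * φ x) =
      Gam1 f cf * (starRingEnd ℂ) cg - cf * (starRingEnd ℂ) (Gam1 g cg) +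
        ip f ψ * ip φ g - ip f φ * ip ψ g :=
  stmt15_general φ ψ hφ f g cf cg hf hcf hg hcg
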